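/- arXiv:1707.02012 — 7 statements merged into one kernel-verified Lean document; each statement's English description precedes it below -/
import Mathlib

section
/- Let F2'=⟨f1+f3, e1-e3⟩ ⊆ F3'=⟨f1+f3, e1-e3, f2⟩ in the 6-dimensional symplectic space V. An element (g1,g2) of (GL2 ⊠ GSp4)(Q) stabilizes the flag F2'⊆F3' if and only if there exist a,b,c,d with g1 = [[a,-b],[-c,d]] (on ⟨e1,f1⟩) and g2 acting on ⟨e2,e3,f3,f2⟩ by a matrix of the form [[*,0,0,*],[0,a,b,0],[0,c,d,0],[0,0,0,*]] (in the ordered basis e2,e3,f3,f2) subject to the symplectic similitude condition. -/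
/-! The stabilizer in `GL2 ⊠ GSp4` of the flag `⟨f1+f3, e1−e3⟩ ⊆ ⟨f1+f3, e1−e3, f2⟩`. -/

abbrev V6 : Type := Fin 6 → ℚ

/-- Symplectic form; indices `0,…,5` are `e1,e2,e3,f3,f2,f1`. -/
def symp (x y : V6) : ℚ :=
  x 0 * y 5 - x 5 * y 0 + x 1 * y 4 - x 4 * y 1 + x 2 * y 3 - x 3 * y 2

def e1 : V6 := Pi.single 0 1
def e2 : V6 := Pi.single 1 1
def e3 : V6 := Pi.single 2 1
def f3 : V6 := Pi.single 3 1
def f2 : V6 := Pi.single 4 1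
def f1 : V6 := Pi.single 5 1

def V1 : Submodule ℚ V6 := Submodule.span ℚ {e1, f1}
def V2 : Submodule ℚ V6 := Submodule.span ℚ {e2, e3, f3, f2}

/-- `(GL2 ⊠ GSp4)(ℚ)`: invertible linear maps preserving `V1` and `V2` and scaling the
symplectic form by a single nonzero similitude factor (the symplectic similitude condition). -/
def Hgrp : Set (V6 ≃ₗ[ℚ] V6) :=
  {g | (∃ ν : ℚ, ν ≠ 0 ∧ ∀ x y : V6, symp (g x) (g y) = ν * symp x y) ∧
    Submodule.map (g : V6 →ₗ[ℚ] V6) V1 = V1 ∧ Submodule.map (g : V6 →ₗ[ℚ] V6) V2 = V2}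

/-- `F2' = ⟨f1+f3, e1−e3⟩`. -/
def F2' : Submodule ℚ V6 := Submodule.span ℚ {f1 + f3, e1 - e3}
/-- `F3' = ⟨f1+f3, e1−e3, f2⟩`. -/
def F3' : Submodule ℚ V6 := Submodule.span ℚ {f1 + f3, e1 - e3, f2}

/-! `F2'` is the graph of the map `V1 → V2`, `e1 ↦ -e3`, `f1 ↦ f3`. Hence if `g` preserves `V1`,
`V2` and `F2'`, it acts on `⟨e3, f3⟩` by its matrix on `⟨e1, f1⟩` transported along this map.
Since `F3' ∩ V2 = ⟨f2⟩`, `g` preserves the line `⟨f2⟩`; and `g e2 ∈ V2` is symplectically orthogonal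
to `g e3, g f3`, which span `⟨e3, f3⟩`, so it lies in `⟨e2, f2⟩`. Conversely such a `g` maps the
generators of `F2'` and `F3'` into them. -/

theorem Submodule.map_span_eq_of_forall_mem {K V : Type*} [DivisionRing K] [AddCommGroup V]
    [Module K V] (g : V ≃ₗ[K] V) {s : Set V} [FiniteDimensional K (span K s)]
    (h : ∀ v ∈ s, g v ∈ span K s) : (span K s).map (g : V →ₗ[K] V) = span K s := by
  refine eq_of_le_of_finrank_eq ?_ (g.finrank_map_eq _)
  rw [map_span, span_le, Set.image_subset_iff]
  exact h

theorem LinearEquiv.apply_mem_of_map_eq {R M : Type*} [Semiring R] [AddCommMonoid M]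
    [Module R M] {g : M ≃ₗ[R] M} {W : Submodule R M} (hW : W.map (g : M →ₗ[R] M) = W) (v : M)
    (hv : v ∈ W) : g v ∈ W :=
  hW ▸ Submodule.mem_map_of_mem hv

theorem coords_of_mem_V2 {x : V6} (hx : x ∈ V2) : x 0 = 0 ∧ x 5 = 0 := by
  induction hx using Submodule.span_induction with
  | mem y hy => rcases hy with rfl | rfl | rfl | rfl <;> simp [e2, e3, f3, f2]
  | zero => simp
  | add y z _ _ hy hz => simp [hy.1, hy.2, hz.1, hz.2]
  | smul r y _ hy => simp [hy.1, hy.2]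

theorem coords_of_mem_F2' {x : V6} (hx : x ∈ F2') :
    x 1 = 0 ∧ x 4 = 0 ∧ x 0 + x 2 = 0 ∧ x 3 = x 5 := by
  obtain ⟨a, b, rfl⟩ := Submodule.mem_span_pair.1 hx
  simp [e1, e3, f3, f1]

theorem coords_of_mem_F3' {x : V6} (hx : x ∈ F3') : x 1 = 0 ∧ x 0 + x 2 = 0 ∧ x 3 = x 5 := by
  obtain ⟨a, b, c, rfl⟩ := Submodule.mem_span_triple.1 hx
  simp [e1, e3, f3, f2, f1]

theorem eq_of_add_mem_F2' {p q : ℚ} {y : V6} (hy : y ∈ V2) (h : p • e1 + q • f1 + y ∈ F2') :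
    y = -p • e3 + q • f3 := by
  obtain ⟨hy0, hy5⟩ := coords_of_mem_V2 hy
  obtain ⟨h1, h4, h02, h35⟩ := coords_of_mem_F2' h
  funext i
  fin_cases i <;> simp [e1, e3, f3, f1] at * <;> linarith

theorem eq_smul_f2_of_mem_V2_of_mem_F3' {x : V6} (hV : x ∈ V2) (hF : x ∈ F3') :
    x = x 4 • f2 := by
  obtain ⟨h0, h5⟩ := coords_of_mem_V2 hV
  obtain ⟨h1, h02, h35⟩ := coords_of_mem_F3' hF
  funext i
  fin_cases i <;> simp [f2] at * <;> linarith

theorem symp_smul_e3_add_smul_f3 (x : V6) (a b : ℚ) :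
    symp x (a • e3 + b • f3) = x 2 * b - x 3 * a := by
  simp [symp, e3, f3]

theorem symp_smul_e3_add_smul_f3_smul_e3_add_smul_f3 (a b c d : ℚ) :
    symp (a • e3 + b • f3) (c • e3 + d • f3) = a * d - b * c := by
  simp [symp, e3, f3]

theorem eq_of_mem_V2_of_symp_eq_zero {x : V6} (hx : x ∈ V2) {a b c d : ℚ}
    (hdet : a * d - b * c ≠ 0) (h₁ : symp x (a • e3 + b • f3) = 0)
    (h₂ : symp x (c • e3 + d • f3) = 0) : x = x 1 • e2 + x 4 • f2 := by
  obtain ⟨h0, h5⟩ := coords_of_mem_V2 hx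
  rw [symp_smul_e3_add_smul_f3] at h₁ h₂
  have h2 : x 2 * (a * d - b * c) = 0 := by linear_combination a * h₂ - c * h₁
  have h3 : x 3 * (a * d - b * c) = 0 := by linear_combination b * h₂ - d * h₁
  have hx2 := (mul_eq_zero.1 h2).resolve_right hdet
  have hx3 := (mul_eq_zero.1 h3).resolve_right hdet
  funext i
  fin_cases i <;> simp [e2, f2] at * <;> linarith

theorem apply_e3_f3_of_map_F2'_eq {g : V6 ≃ₗ[ℚ] V6} (hV2 : V2.map (g : V6 →ₗ[ℚ] V6) = V2)
    (hF2 : F2'.map (g : V6 →ₗ[ℚ] V6) = F2') {a b c d : ℚ} (he1 : g e1 = a • e1 + b • f1)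
    (hf1 : g f1 = c • e1 + d • f1) : g e3 = a • e3 + -b • f3 ∧ g f3 = -c • e3 + d • f3 := by
  have he1e3 := g.apply_mem_of_map_eq hF2 (e1 - e3) (Submodule.subset_span (by simp))
  have hf1f3 := g.apply_mem_of_map_eq hF2 (f1 + f3) (Submodule.subset_span (by simp))
  have he3 := g.apply_mem_of_map_eq hV2 e3 (Submodule.subset_span (by simp))
  have hf3 := g.apply_mem_of_map_eq hV2 f3 (Submodule.subset_span (by simp))
  rw [map_sub, he1, sub_eq_add_neg] at he1e3
  rw [map_add, hf1] at hf1f3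
  refine ⟨?_, eq_of_add_mem_F2' hf3 hf1f3⟩
  rw [← neg_neg (g e3), eq_of_add_mem_F2' (neg_mem he3) he1e3]
  module

theorem map_F2'_eq_and_map_F3'_eq {g : V6 ≃ₗ[ℚ] V6} {a b c d w : ℚ}
    (he1 : g e1 = a • e1 - b • f1) (hf1 : g f1 = -c • e1 + d • f1)
    (he3 : g e3 = a • e3 + b • f3) (hf3 : g f3 = c • e3 + d • f3) (hf2 : g f2 = w • f2) :
    F2'.map (g : V6 →ₗ[ℚ] V6) = F2' ∧ F3'.map (g : V6 →ₗ[ℚ] V6) = F3' := by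
  have hf1f3 : g (f1 + f3) = d • (f1 + f3) + -c • (e1 - e3) := by
    rw [map_add, hf1, hf3]; module
  have he1e3 : g (e1 - e3) = -b • (f1 + f3) + a • (e1 - e3) := by
    rw [map_sub, he1, he3]; module
  refine ⟨Submodule.map_span_eq_of_forall_mem g ?_, Submodule.map_span_eq_of_forall_mem g ?_⟩
  · rintro v (rfl | rfl)
    · exact Submodule.mem_span_pair.2 ⟨d, -c, hf1f3.symm⟩
    · exact Submodule.mem_span_pair.2 ⟨-b, a, he1e3.symm⟩
  · rintro v (rfl | rfl | rfl)
    · exact Submodule.mem_span_triple.2 ⟨d, -c, 0, by rw [hf1f3]; module⟩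
    · exact Submodule.mem_span_triple.2 ⟨-b, a, 0, by rw [he1e3]; module⟩
    · exact Submodule.mem_span_triple.2 ⟨0, 0, w, by rw [hf2]; module⟩

/-- An element `(g1, g2)` of `(GL2 ⊠ GSp4)(ℚ)` stabilizes the flag `F2' ⊆ F3'` if and only
if there are `a, b, c, d` with `g1 = [[a,-b],[-c,d]]` on `⟨e1,f1⟩` and `g2` acting on
`⟨e2,e3,f3,f2⟩` by a matrix `[[*,0,0,*],[0,a,b,0],[0,c,d,0],[0,0,0,*]]` in the ordered basis
`e2, e3, f3, f2` (the similitude condition being part of membership in the group). -/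
theorem stab_flag_iff (g : V6 ≃ₗ[ℚ] V6) (hg : g ∈ Hgrp) :
    (Submodule.map (g : V6 →ₗ[ℚ] V6) F2' = F2' ∧
      Submodule.map (g : V6 →ₗ[ℚ] V6) F3' = F3') ↔
    ∃ a b c d s u w : ℚ,
      g e1 = a • e1 - b • f1 ∧
      g f1 = -c • e1 + d • f1 ∧
      g e3 = a • e3 + b • f3 ∧
      g f3 = c • e3 + d • f3 ∧
      g e2 = s • e2 + u • f2 ∧
      g f2 = w • f2 := by
  refine ⟨fun ⟨hF2, hF3⟩ ↦ ?_, fun ⟨a, b, c, d, _, _, w, he1, hf1, he3, hf3, _, hf2⟩ ↦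
    map_F2'_eq_and_map_F3'_eq he1 hf1 he3 hf3 hf2⟩
  obtain ⟨⟨ν, hν0, hν⟩, hV1, hV2⟩ := hg
  have mem_V2 (v : V6) (hv : v ∈ V2) : g v ∈ V2 := g.apply_mem_of_map_eq hV2 v hv
  obtain ⟨a, b, he1⟩ := Submodule.mem_span_pair.1 (g.apply_mem_of_map_eq hV1 e1
    (Submodule.subset_span (by simp)))
  obtain ⟨c, d, hf1⟩ := Submodule.mem_span_pair.1 (g.apply_mem_of_map_eq hV1 f1
    (Submodule.subset_span (by simp)))
  obtain ⟨he3, hf3⟩ := apply_e3_f3_of_map_F2'_eq hV2 hF2 he1.symm hf1.symm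
  have hdet : a * d - -b * -c ≠ 0 := by
    rw [← symp_smul_e3_add_smul_f3_smul_e3_add_smul_f3, ← he3, ← hf3, hν]
    simpa [symp, e3, f3] using hν0
  have he2 : g e2 = g e2 1 • e2 + g e2 4 • f2 := by
    refine eq_of_mem_V2_of_symp_eq_zero (mem_V2 e2 (Submodule.subset_span (by simp))) hdet ?_ ?_
    · rw [← he3, hν]; simp [symp, e2, e3]
    · rw [← hf3, hν]; simp [symp, e2, f3]
  have hf2 := eq_smul_f2_of_mem_V2_of_mem_F3' (mem_V2 f2 (Submodule.subset_span (by simp)))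
    (g.apply_mem_of_map_eq hF3 f2 (Submodule.subset_span (by simp)))
  exact ⟨a, -b, -c, d, g e2 1, g e2 4, g f2 4, by rw [← he1]; module, by rw [← hf1]; module,
    he3, hf3, he2, hf2⟩
end

section
/- Let F be a nonarchimedean local field with residue cardinality q and ψ an additive character of F with conductor O_F (trivial on O_F, nontrivial on π^{-1}O_F). For a ∈ F^× and real u > 1: ∫_F ψ(ax)·max(1,|x|)^{-u} dx = 0 if |a| > 1, and equals ζ(u)^{-1}·(1 + q^{-(u-1)} + ... + q^{-(u-1)·ord(a)}) if |a| ≤ 1, where ζ(s)=(1-q^{-s})^{-1} and ord(a) is the valuation of a. -/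
/-!
Write `max(1, |x|)^{-u} = ∑ₙ (1 - p^{-u}) p^{-nu} 𝟙[|x| ≤ pⁿ]` and integrate term by term. By
translation invariance the ball of radius `pⁿ` splits into `p` translates of the ball of radius
`pⁿ⁻¹`, so it has measure `pⁿ`. The integral of `ψ(a x)` over it is `pⁿ` when `ψ(a ·)` is trivial
on the ball (`n ≤ ord a`), and `0` otherwise, since the ball is then invariant under a translation
by some `b` with `ψ(a b) ≠ 1`. Only the terms with `n ≤ ord a` survive.
-/

open MeasureTheory

/-- The local zeta factor `ζ(s) = (1 - q^{-s})⁻¹`. -/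
noncomputable def localZeta (q : ℕ) (s : ℝ) : ℝ := (1 - (q : ℝ) ^ (-s))⁻¹

open Metric Filter Topology

namespace AddChar

lemma isLocallyConstant_of_eventually_eq_one {G M : Type*} [AddGroup G] [TopologicalSpace G]
    [IsTopologicalAddGroup G] [Monoid M] (ψ : AddChar G M) (hψ : ∀ᶠ x in 𝓝 0, ψ x = 1) :
    IsLocallyConstant ψ := by
  refine (IsLocallyConstant.iff_eventually_eq ψ).2 fun x => ?_
  have hsub : Tendsto (· - x) (𝓝 x) (𝓝 0) := by
    simpa using (continuous_sub_right x).tendsto x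
  filter_upwards [hsub.eventually hψ] with y hy
  rw [← sub_add_cancel y x, map_add_eq_mul, hy, one_mul]

lemma setIntegral_eq_zero_of_preimage_add_eq {G : Type*} [AddGroup G] [MeasurableSpace G]
    [MeasurableAdd G] {μ : Measure G} [μ.IsAddLeftInvariant] (χ : AddChar G ℂ) {s : Set G}
    (hs : MeasurableSet s) {b : G} (hsb : (b + ·) ⁻¹' s = s) (hb : χ b ≠ 1) :
    ∫ x in s, χ x ∂μ = 0 := by
  have hshift : ∫ x in s, χ x ∂μ = χ b * ∫ x in s, χ x ∂μ := by
    rw [← integral_indicator hs]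
    conv_lhs => rw [← integral_add_left_eq_self _ b]
    rw [← integral_const_mul]
    congr 1 with x
    have hx : b + x ∈ s ↔ x ∈ s := by rw [← Set.mem_preimage (f := (b + ·)), hsb]
    by_cases h : x ∈ s <;> simp [hx, h, map_add_eq_mul]
  have : (1 - χ b) * ∫ x in s, χ x ∂μ = 0 := by linear_combination hshift
  exact (mul_eq_zero.1 this).resolve_left (sub_ne_zero.2 hb.symm)

end AddChar

lemma hasSum_ite_le_one_sub_mul_pow {r : ℝ} (hr₀ : 0 ≤ r) (hr₁ : r < 1) (m : ℕ) :
    HasSum (fun n => if m ≤ n then (1 - r) * r ^ n else 0) (r ^ m) := by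
  rw [← hasSum_nat_add_iff' m, Finset.sum_eq_zero fun i hi => if_neg (by simpa using hi),
    sub_zero]
  have h := (hasSum_geometric_of_lt_one hr₀ hr₁).mul_left ((1 - r) * r ^ m)
  rw [mul_right_comm, mul_inv_cancel₀ (sub_ne_zero.2 hr₁.ne'), one_mul] at h
  have hshift : (fun n => if m ≤ n + m then (1 - r) * r ^ (n + m) else 0) =
      fun n => (1 - r) * r ^ m * r ^ n := funext fun n => by
    rw [if_pos (Nat.le_add_left m n), pow_add, mul_comm (r ^ n), mul_assoc]
  rwa [hshift]

lemma integral_mul_tsum_indicator_eq_tsum {α : Type*} [MeasurableSpace α] {μ : Measure α}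
    {s : ℕ → Set α} (hs : ∀ n, MeasurableSet (s n)) (hμs : ∀ n, μ (s n) < ⊤)
    {c : ℕ → ℝ} (hc : ∀ n, 0 ≤ c n) (hsum : Summable fun n => c n * μ.real (s n)) {g : α → ℂ}
    (hg : AEStronglyMeasurable g μ) (hg_le : ∀ x, ‖g x‖ ≤ 1) :
    ∫ x, g x * ((∑' n, (s n).indicator (fun _ => c n) x : ℝ) : ℂ) ∂μ =
      ∑' n, (c n : ℂ) * ∫ x in s n, g x ∂μ := by
  set F : ℕ → α → ℂ := fun n => (s n).indicator fun x => (c n : ℂ) * g x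
  have hFg (n : ℕ) (x : α) : ‖(c n : ℂ) * g x‖ ≤ c n := by
    rw [norm_mul, Complex.norm_real, Real.norm_of_nonneg (hc n)]
    exact mul_le_of_le_one_right (hc n) (hg_le x)
  have hF_int (n : ℕ) : Integrable (F n) μ :=
    (integrable_indicator_iff (hs n)).2 <|
      Measure.integrableOn_of_bounded (hμs n).ne (hg.const_mul _) (ae_of_all _ (hFg n))
  have hF_norm (n : ℕ) : ∫ x, ‖F n x‖ ∂μ ≤ c n * μ.real (s n) := by
    simp_rw [F, norm_indicator_eq_indicator_norm]
    rw [integral_indicator (hs n)]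
    exact (le_abs_self _).trans
      (norm_setIntegral_le_of_norm_le_const (hμs n) fun x _ => (norm_norm _).trans_le (hFg n x))
  have hF_sum : Summable fun n => ∫ x, ‖F n x‖ ∂μ :=
    .of_nonneg_of_le (fun n => integral_nonneg fun _ => norm_nonneg _) hF_norm hsum
  have hF_tsum (x : α) :
      ∑' n, F n x = g x * ((∑' n, (s n).indicator (fun _ => c n) x : ℝ) : ℂ) := by
    rw [Complex.ofReal_tsum, ← tsum_mul_left]
    congr 1 with n
    by_cases hx : x ∈ s n <;> simp [F, hx, mul_comm]
  simp_rw [← hF_tsum]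
  rw [← integral_tsum_of_summable_integral_norm hF_int hF_sum]
  congr 1 with n
  rw [integral_indicator (hs n), integral_const_mul]

namespace Padic

variable {p : ℕ} [Fact p.Prime]

lemma one_lt_natCast_prime : (1 : ℝ) < p := Nat.one_lt_cast.2 (Fact.out : p.Prime).one_lt

lemma natCast_prime_pos : (0 : ℝ) < p := zero_lt_one.trans one_lt_natCast_prime

lemma max_one_norm_eq_pow (x : ℚ_[p]) : max 1 ‖x‖ = (p : ℝ) ^ (-x.valuation).toNat := by
  rcases eq_or_ne x 0 with rfl | hx
  · simp
  rw [← zpow_natCast, Int.toNat_eq_max, norm_eq_zpow_neg_valuation hx,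
    (zpow_right_strictMono₀ one_lt_natCast_prime).monotone.map_max, zpow_zero, max_comm]

lemma norm_le_pow_iff (x : ℚ_[p]) (n : ℕ) :
    ‖x‖ ≤ (p : ℝ) ^ n ↔ (-x.valuation).toNat ≤ n := by
  rw [← pow_le_pow_iff_right₀ (one_lt_natCast_prime (p := p)), ← max_one_norm_eq_pow,
    max_le_iff, and_iff_right (one_le_pow₀ one_lt_natCast_prime.le)]

lemma norm_mul_pow_eq_zpow {a : ℚ_[p]} (ha : a ≠ 0) (n : ℕ) :
    ‖a‖ * (p : ℝ) ^ n = (p : ℝ) ^ ((n : ℤ) - a.valuation) := by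
  rw [norm_eq_zpow_neg_valuation ha, ← zpow_natCast, ← zpow_add₀ natCast_prime_pos.ne',
    neg_add_eq_sub]

lemma closedBall_zero_norm_eq_biUnion {c : ℚ_[p]} (hc : c ≠ 0) :
    closedBall (0 : ℚ_[p]) ‖c‖ =
      ⋃ j ∈ Finset.range p, closedBall ((j : ℚ_[p]) * c) (‖c‖ / p) := by
  ext x
  simp only [Set.mem_iUnion, Finset.mem_range, mem_closedBall, dist_eq_norm, sub_zero]
  constructor
  · intro hx
    set z : ℤ_[p] := ⟨x / c, by rw [norm_div]; exact div_le_one_of_le₀ hx (norm_nonneg _)⟩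
    obtain ⟨j, hj, hzj⟩ := PadicInt.exists_mem_range (x := z)
    have hdigit : ‖x / c - j‖ ≤ (p : ℝ) ^ (-1 : ℤ) := by
      have hnorm : ‖z - j‖ = ‖x / c - j‖ := by
        rw [PadicInt.norm_def, PadicInt.coe_sub, PadicInt.coe_natCast]
      rw [norm_le_pow_iff_norm_lt_pow_add_one, neg_add_cancel, zpow_zero, ← hnorm]
      exact PadicInt.mem_nonunits.1 hzj
    refine ⟨j, hj, ?_⟩
    calc ‖x - j * c‖ = ‖x / c - j‖ * ‖c‖ := by
          rw [← norm_mul, sub_mul, div_mul_cancel₀ _ hc]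
      _ ≤ (p : ℝ) ^ (-1 : ℤ) * ‖c‖ := by gcongr
      _ = ‖c‖ / p := by rw [zpow_neg_one, inv_mul_eq_div]
  · rintro ⟨j, -, hx⟩
    have hjc : (j : ℚ_[p]) * c ∈ closedBall 0 ‖c‖ := by
      rw [mem_closedBall_zero_iff, norm_mul]
      exact mul_le_of_le_one_left (norm_nonneg _) (by exact_mod_cast norm_int_le_one j)
    rw [← mem_closedBall_zero_iff, IsUltrametricDist.closedBall_eq_of_mem hjc]
    exact closedBall_subset_closedBall
      (div_le_self (norm_nonneg _) one_lt_natCast_prime.le) (mem_closedBall.2 hx)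

lemma pairwiseDisjoint_closedBall_natCast_mul {c : ℚ_[p]} (hc : c ≠ 0) :
    (Finset.range p : Set ℕ).PairwiseDisjoint
      fun j => closedBall ((j : ℚ_[p]) * c) (‖c‖ / p) := by
  intro i hi j hj hij
  refine (IsUltrametricDist.closedBall_eq_or_disjoint _ _ _).resolve_left fun hball => hij ?_
  have hmem : (j : ℚ_[p]) * c ∈ closedBall ((i : ℚ_[p]) * c) (‖c‖ / p) :=
    hball ▸ mem_closedBall_self (by positivity)
  have hlt : ‖(((i : ℤ) - j : ℤ) : ℚ_[p])‖ < 1 := by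
    rw [mem_closedBall, dist_comm, dist_eq_norm, ← sub_mul, norm_mul,
      ← le_div_iff₀ (norm_pos_iff.2 hc), div_div_cancel_left' (norm_ne_zero_iff.2 hc)] at hmem
    push_cast
    exact hmem.trans_lt (inv_lt_one_of_one_lt₀ one_lt_natCast_prime)
  simp only [Finset.coe_range, Set.mem_Iio] at hi hj
  have hmod : j ≡ i [MOD p] :=
    Int.natCast_modEq_iff.1 (Int.modEq_iff_dvd.2 (norm_intCast_lt_one_iff.1 hlt))
  exact (hmod.eq_of_lt_of_lt hj hi).symm

lemma norm_addChar_eq_one (ψ : AddChar ℚ_[p] ℂ) (hψ : ∀ x : ℚ_[p], ‖x‖ ≤ 1 → ψ x = 1)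
    (x : ℚ_[p]) : ‖ψ x‖ = 1 := by
  obtain ⟨n, hn⟩ := pow_unbounded_of_one_lt ‖x‖ (one_lt_natCast_prime (p := p))
  refine Complex.norm_eq_one_of_pow_eq_one (n := p ^ n) ?_
    (pow_ne_zero _ (Fact.out : p.Prime).ne_zero)
  rw [← AddChar.map_nsmul_eq_pow, hψ]
  rw [nsmul_eq_mul, norm_mul, Nat.cast_pow, norm_pow, norm_p, inv_pow,
    inv_mul_le_one₀ (pow_pos natCast_prime_pos n)]
  exact hn.le

lemma continuous_addChar (ψ : AddChar ℚ_[p] ℂ) (hψ : ∀ x : ℚ_[p], ‖x‖ ≤ 1 → ψ x = 1) :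
    Continuous ψ :=
  (ψ.isLocallyConstant_of_eventually_eq_one <|
    eventually_of_mem (closedBall_mem_nhds 0 one_pos) fun x hx =>
      hψ x (mem_closedBall_zero_iff.1 hx)).continuous

lemma hasSum_indicator_closedBall_pow {u : ℝ} (hu : 0 < u) (x : ℚ_[p]) :
    HasSum (fun n : ℕ => (closedBall (0 : ℚ_[p]) ((p : ℝ) ^ n)).indicator
      (fun _ => (1 - (p : ℝ) ^ (-u)) * ((p : ℝ) ^ (-u)) ^ n) x) (max 1 ‖x‖ ^ (-u)) := by
  classical
  simp only [Set.indicator_apply, mem_closedBall_zero_iff, norm_le_pow_iff]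
  rw [max_one_norm_eq_pow, ← Real.rpow_pow_comm natCast_prime_pos.le]
  exact hasSum_ite_le_one_sub_mul_pow (Real.rpow_nonneg natCast_prime_pos.le _)
    (Real.rpow_lt_one_of_one_lt_of_neg one_lt_natCast_prime (by linarith)) _

lemma tsum_one_sub_mul_rpow_pow_mul_ite {v : ℤ} (hv : 0 ≤ v) (u : ℝ) :
    ∑' n : ℕ, (((1 - (p : ℝ) ^ (-u)) * ((p : ℝ) ^ (-u)) ^ n : ℝ) : ℂ) *
        (if (n : ℤ) ≤ v then (p : ℂ) ^ n else 0) =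
      ((1 - (p : ℝ) ^ (-u) : ℝ) : ℂ) *
        ∑ k ∈ Finset.range (v.toNat + 1), (((p : ℝ) ^ (-(u - 1) * k) : ℝ) : ℂ) := by
  rw [tsum_eq_sum (s := Finset.range (v.toNat + 1)) fun n hn => by
    rw [if_neg (by simp at hn; omega), mul_zero], Finset.mul_sum]
  refine Finset.sum_congr rfl fun n hn => ?_
  have hpow : ((p : ℝ) ^ (-u)) ^ n * (p : ℝ) ^ n = (p : ℝ) ^ (-(u - 1) * n) := by
    rw [← mul_pow, ← Real.rpow_add_one natCast_prime_pos.ne',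
      Real.rpow_mul_natCast natCast_prime_pos.le]
    ring_nf
  rw [if_pos (by simp at hn; omega), ← hpow]
  push_cast
  ring

variable [MeasurableSpace ℚ_[p]] [BorelSpace ℚ_[p]]
  {μ : Measure ℚ_[p]} [μ.IsAddLeftInvariant]

lemma measure_closedBall_zero_norm {c : ℚ_[p]} (hc : c ≠ 0) :
    μ (closedBall 0 ‖c‖) = p * μ (closedBall 0 (‖c‖ / p)) := by
  have htranslate (j : ℕ) :
      μ (closedBall ((j : ℚ_[p]) * c) (‖c‖ / p)) = μ (closedBall 0 (‖c‖ / p)) := by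
    rw [eq_comm, ← measure_preimage_add μ (-(j * c)), preimage_add_closedBall, zero_sub, neg_neg]
  rw [closedBall_zero_norm_eq_biUnion hc, measure_biUnion_finset
    (pairwiseDisjoint_closedBall_natCast_mul hc) fun _ _ => measurableSet_closedBall]
  simp only [htranslate, Finset.sum_const, Finset.card_range, nsmul_eq_mul]

lemma measure_closedBall_zero_pow (hone : μ (closedBall 0 1) = 1) (n : ℕ) :
    μ (closedBall 0 ((p : ℝ) ^ n)) = (p : ENNReal) ^ n := by
  induction n with
  | zero => simpa using hone
  | succ n ih =>
    have hc : ‖(p : ℚ_[p])⁻¹ ^ (n + 1)‖ = (p : ℝ) ^ (n + 1) := by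
      rw [norm_pow, norm_inv, norm_p, inv_inv]
    rw [← hc, measure_closedBall_zero_norm (by simp [(Fact.out : p.Prime).ne_zero]), hc,
      pow_succ, mul_div_cancel_right₀ _ natCast_prime_pos.ne', ih, pow_succ, mul_comm]

lemma setIntegral_closedBall_addChar_mul (hone : μ (closedBall 0 1) = 1) (ψ : AddChar ℚ_[p] ℂ)
    (hψ_triv : ∀ x : ℚ_[p], ‖x‖ ≤ 1 → ψ x = 1)
    (hψ_nontriv : ∃ x : ℚ_[p], ‖x‖ ≤ p ∧ ψ x ≠ 1) {a : ℚ_[p]} (ha : a ≠ 0) (n : ℕ) :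
    ∫ x in closedBall (0 : ℚ_[p]) ((p : ℝ) ^ n), ψ (a * x) ∂μ =
      if (n : ℤ) ≤ a.valuation then (p : ℂ) ^ n else 0 := by
  split_ifs with hn
  · have ha_le : ‖a‖ * (p : ℝ) ^ n ≤ 1 := by
      rw [norm_mul_pow_eq_zpow ha]
      exact zpow_le_one_of_nonpos₀ one_lt_natCast_prime.le (by omega)
    calc ∫ x in closedBall (0 : ℚ_[p]) ((p : ℝ) ^ n), ψ (a * x) ∂μ
        = ∫ x in closedBall (0 : ℚ_[p]) ((p : ℝ) ^ n), (1 : ℂ) ∂μ := by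
          refine setIntegral_congr_fun measurableSet_closedBall fun x hx => hψ_triv _ ?_
          rw [norm_mul]
          exact (mul_le_mul_of_nonneg_left (mem_closedBall_zero_iff.1 hx) (norm_nonneg a)).trans
            ha_le
      _ = (p : ℂ) ^ n := by simp [measureReal_def, measure_closedBall_zero_pow hone]
  · obtain ⟨x₁, hx₁, hψx₁⟩ := hψ_nontriv
    have hb : ‖x₁ / a‖ ≤ (p : ℝ) ^ n := by
      have hpa : (p : ℝ) ≤ ‖a‖ * (p : ℝ) ^ n := by
        rw [norm_mul_pow_eq_zpow ha]
        exact (zpow_one (p : ℝ)).symm.trans_le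
          (zpow_le_zpow_right₀ one_lt_natCast_prime.le (by omega))
      rw [norm_div, div_le_iff₀ (norm_pos_iff.2 ha), mul_comm]
      exact hx₁.trans hpa
    refine AddChar.setIntegral_eq_zero_of_preimage_add_eq
      (ψ.compAddMonoidHom (AddMonoidHom.mulLeft a)) measurableSet_closedBall (b := x₁ / a) ?_ ?_
    · rw [preimage_add_closedBall, zero_sub,
        ← IsUltrametricDist.closedBall_eq_of_mem (mem_closedBall_zero_iff.2 <| by rwa [norm_neg])]
    · simpa [mul_div_cancel₀ _ ha] using hψx₁

lemma integral_mul_max_one_norm_rpow_eq_tsum (hone : μ (closedBall 0 1) = 1) {g : ℚ_[p] → ℂ}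
    (hg : AEStronglyMeasurable g μ) (hg_le : ∀ x, ‖g x‖ ≤ 1) {u : ℝ} (hu : 1 < u) :
    ∫ x, g x * (max 1 ‖x‖ ^ (-u) : ℝ) ∂μ =
      ∑' n : ℕ, (((1 - (p : ℝ) ^ (-u)) * ((p : ℝ) ^ (-u)) ^ n : ℝ) : ℂ) *
        ∫ x in closedBall (0 : ℚ_[p]) ((p : ℝ) ^ n), g x ∂μ := by
  have hp := one_lt_natCast_prime (p := p)
  set r : ℝ := (p : ℝ) ^ (-u)
  have hr₀ : 0 ≤ r := by positivity
  have hr₁ : r < 1 := Real.rpow_lt_one_of_one_lt_of_neg hp (by linarith)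
  have hrp : r * p < 1 := by
    rw [← Real.rpow_add_one (by positivity)]
    exact Real.rpow_lt_one_of_one_lt_of_neg hp (by linarith)
  simp_rw [fun x => ((hasSum_indicator_closedBall_pow (u := u) (by linarith) x).tsum_eq).symm]
  refine integral_mul_tsum_indicator_eq_tsum (fun _ => measurableSet_closedBall)
    (fun n => by rw [measure_closedBall_zero_pow hone]; exact ENNReal.pow_lt_top (by simp))
    (fun n => mul_nonneg (sub_nonneg.2 hr₁.le) (pow_nonneg hr₀ n)) ?_ hg hg_le
  simpa [measureReal_def, measure_closedBall_zero_pow hone, mul_assoc, ← mul_pow] using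
    (summable_geometric_of_lt_one (by positivity) hrp).mul_left (1 - r)

end Padic

open Padic in
/-- For `F = ℚ_p` with Haar measure giving `O_F` measure 1 and `ψ` an additive character with
conductor `O_F`: for `a ∈ F^×` and real `u > 1`, the integral `∫ ψ(ax) max(1,|x|)^{-u} dx`
vanishes when `|a| > 1`, and equals `ζ(u)⁻¹ (1 + q^{-(u-1)} + ⋯ + q^{-(u-1)·ord(a)})`
when `|a| ≤ 1`. -/
theorem padic_integral_char_max (p : ℕ) [Fact p.Prime]
    [MeasurableSpace ℚ_[p]] [BorelSpace ℚ_[p]]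
    (μ : Measure ℚ_[p])
    (hinv : ∀ (b : ℚ_[p]) (s : Set ℚ_[p]), μ ((b + ·) ⁻¹' s) = μ s)
    (hone : μ {x : ℚ_[p] | ‖x‖ ≤ 1} = 1)
    (ψ : AddChar ℚ_[p] ℂ)
    (hψ_triv : ∀ x : ℚ_[p], ‖x‖ ≤ 1 → ψ x = 1)
    (hψ_nontriv : ∃ x : ℚ_[p], ‖x‖ ≤ p ∧ ψ x ≠ 1)
    (a : ℚ_[p]) (ha : a ≠ 0) (u : ℝ) (hu : 1 < u) :
    (1 < ‖a‖ → ∫ x : ℚ_[p], ψ (a * x) * ((max 1 ‖x‖ : ℝ) ^ (-u) : ℝ) ∂μ = 0) ∧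
    (‖a‖ ≤ 1 → ∫ x : ℚ_[p], ψ (a * x) * ((max 1 ‖x‖ : ℝ) ^ (-u) : ℝ) ∂μ
      = ((localZeta p u)⁻¹ : ℝ) *
        ∑ k ∈ Finset.range (a.valuation.toNat + 1), (((p : ℝ) ^ (-(u - 1) * k) : ℝ) : ℂ) ) := by
  have : μ.IsAddLeftInvariant := ⟨fun b => Measure.ext fun s hs => by
    rw [Measure.map_apply (measurable_const_add b) hs, hinv]⟩
  have hball : μ (closedBall 0 1) = 1 := by rw [← hone]; congr 1; ext; simp
  have hgeom := integral_mul_max_one_norm_rpow_eq_tsum hball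
    ((continuous_addChar ψ hψ_triv).comp (continuous_const_mul a)).aestronglyMeasurable
    (fun x => (norm_addChar_eq_one ψ hψ_triv _).le) hu
  simp only [Function.comp_apply,
    setIntegral_closedBall_addChar_mul hball ψ hψ_triv hψ_nontriv ha] at hgeom
  rw [hgeom]
  refine ⟨fun ha_gt => ?_, fun ha_le => ?_⟩
  · have hv : a.valuation < 0 := by
      rw [← not_le, ← norm_le_one_iff_val_nonneg]; exact ha_gt.not_ge
    have hterm (n : ℕ) : ¬(n : ℤ) ≤ a.valuation := by omega
    simp [hterm]
  · rw [tsum_one_sub_mul_rpow_pow_mul_ite ((norm_le_one_iff_val_nonneg a).1 ha_le), localZeta,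
      inv_inv]
end

section
/- Fix nonnegative integers a,b,c with a ≤ c ≤ 2a. Define m(x,y) for nonnegative integers x,y as the number of triples (d,e,f) of integers with 0≤d≤2a-c, 0≤e≤b, 0≤f, satisfying d-e+f = x-b and e+f = y. Then m(x,y) ≠ 0 if and only if: -2a-b+c ≤ -x+y ≤ b, x+y ≥ b, and (if 2a=c) x+y ≡ b (mod 2). Moreover when m(x,y)≠0, setting δ = 0 if x+y ≡ b (mod 2) and δ = 1 otherwise: if y ≥ b then m(x,y) = min(⌊(2a-c-δ)/2⌋, (b+x-y-δ)/2, ⌊(2a+b-c-x+y)/2⌋, b) + 1, and if y < b then m(x,y) = min(⌊(2a-c-δ)/2⌋, (-b+x+y-δ)/2, ⌊(2a+b-c-x+y)/2⌋, y) + 1. -/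
/-!
Eliminating `f = y - e` and `d = x - b - y + 2e`, the solutions are parametrized by the
integers `e` with `max 0 ⌈(b + y - x) / 2⌉ ≤ e ≤ min (min b y) ⌊(2a - c + b + y - x) / 2⌋`,
so `m(x,y)` is the length of this interval, and both claims are linear integer arithmetic on
its endpoints.
-/

/-- `mcount a b c x y` is the number of integer triples `(d,e,f)` with
`0 ≤ d ≤ 2a−c`, `0 ≤ e ≤ b`, `0 ≤ f`, `d − e + f = x − b`, `e + f = y`. -/
noncomputable def mcount (a b c x y : ℕ) : ℕ :=
  Set.ncard {t : ℤ × ℤ × ℤ |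
    0 ≤ t.1 ∧ t.1 ≤ 2 * (a : ℤ) - c ∧ 0 ≤ t.2.1 ∧ t.2.1 ≤ (b : ℤ) ∧ 0 ≤ t.2.2 ∧
    t.1 - t.2.1 + t.2.2 = (x : ℤ) - b ∧ t.2.1 + t.2.2 = (y : ℤ)}

lemma mcount_set_eq_image_Icc (a b c x y : ℕ) :
    {t : ℤ × ℤ × ℤ |
      0 ≤ t.1 ∧ t.1 ≤ 2 * (a : ℤ) - c ∧ 0 ≤ t.2.1 ∧ t.2.1 ≤ (b : ℤ) ∧ 0 ≤ t.2.2 ∧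
      t.1 - t.2.1 + t.2.2 = (x : ℤ) - b ∧ t.2.1 + t.2.2 = (y : ℤ)} =
      (Finset.Icc (max 0 (((b : ℤ) + y - x + 1) / 2))
          (min (min (b : ℤ) y) ((2 * (a : ℤ) - c + b + y - x) / 2))).image
        (fun e : ℤ => ((x : ℤ) - b + 2 * e - y, e, (y : ℤ) - e)) := by
  ext ⟨d, e, f⟩
  simp only [Set.mem_ofPred_eq, Finset.coe_image, Set.mem_image, Finset.mem_coe,
    Finset.mem_Icc, Prod.mk.injEq]
  constructor
  · rintro ⟨hd₀, hd₁, he₀, he₁, hf₀, hsum, hy⟩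
    exact ⟨e, by omega, by omega, rfl, by omega⟩
  · rintro ⟨e, ⟨hlo, hhi⟩, hd, rfl, hf⟩
    omega

lemma mcount_eq_toNat (a b c x y : ℕ) :
    mcount a b c x y =
      (min (min (b : ℤ) y) ((2 * (a : ℤ) - c + b + y - x) / 2) + 1
        - max 0 (((b : ℤ) + y - x + 1) / 2)).toNat := by
  have hinj : Function.Injective (fun e : ℤ => ((x : ℤ) - b + 2 * e - y, e, (y : ℤ) - e)) :=
    fun e₁ e₂ h => congrArg (·.2.1) h
  rw [mcount, mcount_set_eq_image_Icc, Set.ncard_coe_finset, Finset.card_image_of_injective _ hinj,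
    Int.card_Icc]

theorem mcount_formula_a_le_c_general (a b c x y : ℕ) (h2 : c ≤ 2 * a) :
    (mcount a b c x y ≠ 0 ↔
      (-(2 * (a : ℤ)) - b + c ≤ -(x : ℤ) + y ∧ -(x : ℤ) + y ≤ (b : ℤ) ∧
        (b : ℤ) ≤ (x : ℤ) + y ∧ (2 * a = c → ((x : ℤ) + y) % 2 = (b : ℤ) % 2))) ∧
    (mcount a b c x y ≠ 0 →
      ∀ δ : ℤ, (δ = if ((x : ℤ) + y) % 2 = (b : ℤ) % 2 then 0 else 1) →
      ((b ≤ y → (mcount a b c x y : ℤ) =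
          min (min ((2 * (a : ℤ) - c - δ) / 2) (((b : ℤ) + x - y - δ) / 2))
            (min ((2 * (a : ℤ) + b - c - x + y) / 2) (b : ℤ)) + 1) ∧
       (y < b → (mcount a b c x y : ℤ) =
          min (min ((2 * (a : ℤ) - c - δ) / 2) ((-(b : ℤ) + x + y - δ) / 2))
            (min ((2 * (a : ℤ) + b - c - x + y) / 2) (y : ℤ)) + 1))) := by
  rw [mcount_eq_toNat]
  refine ⟨by omega, fun hne δ hδ => ?_⟩
  split_ifs at hδ <;> subst hδ <;> constructor <;> intro <;> omega

/-- Nonvanishing criterion and closed formula for `mcount` in the regime `a ≤ c ≤ 2a`. -/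
theorem mcount_formula_a_le_c (a b c x y : ℕ) (h1 : a ≤ c) (h2 : c ≤ 2 * a) :
    (mcount a b c x y ≠ 0 ↔
      (-(2 * (a : ℤ)) - b + c ≤ -(x : ℤ) + y ∧ -(x : ℤ) + y ≤ (b : ℤ) ∧
        (b : ℤ) ≤ (x : ℤ) + y ∧ (2 * a = c → ((x : ℤ) + y) % 2 = (b : ℤ) % 2))) ∧
    (mcount a b c x y ≠ 0 →
      ∀ δ : ℤ, (δ = if ((x : ℤ) + y) % 2 = (b : ℤ) % 2 then 0 else 1) →
      ((b ≤ y → (mcount a b c x y : ℤ) =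
          min (min ((2 * (a : ℤ) - c - δ) / 2) (((b : ℤ) + x - y - δ) / 2))
            (min ((2 * (a : ℤ) + b - c - x + y) / 2) (b : ℤ)) + 1) ∧
       (y < b → (mcount a b c x y : ℤ) =
          min (min ((2 * (a : ℤ) - c - δ) / 2) ((-(b : ℤ) + x + y - δ) / 2))
            (min ((2 * (a : ℤ) + b - c - x + y) / 2) (y : ℤ)) + 1))) :=
  mcount_formula_a_le_c_general a b c x y h2
end

section
/- Fix nonnegative integers a,b,c with c < a ≤ b+c. Define m(x,y) for nonnegative integers x,y as the number of triples (d,e,f) of integers with 0≤d≤c, 0≤e≤-a+b+c, 0≤f, satisfying d-e+f = x-(-a+b+c) and e+f = y. Then m(x,y) ≠ 0 if and only if a-b-2c ≤ -x+y ≤ -a+b+c, x+y ≥ -a+b+c, and (if c=0) x+y ≡ a+b (mod 2). When m(x,y)≠0, with δ = 0 if x+y ≡ -a+b+c (mod 2) and δ = 1 otherwise: if y ≥ -a+b+c then m(x,y) = min(⌊(c-δ)/2⌋, (-a+b+c+x-y-δ)/2, ⌊(-a+b+2c-x+y)/2⌋, -a+b+c) + 1; if y < -a+b+c then m(x,y)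 = min(⌊(c-δ)/2⌋, (a-b-c+x+y-δ)/2, ⌊(-a+b+2c-x+y)/2⌋, y) + 1. -/
/-!
The constraints `e + f = y` and `d - e + f = s` determine `f = y - e` and `d = s - y + 2e`, so the
solutions are parametrized by `e` alone and `mcount'` counts the integers `e` in an interval whose
endpoints are floors of halves. The nonvanishing criterion and the closed formula are then linear
integer arithmetic on those endpoints, with the parity `δ` deciding which floor is attained.
-/

/-- `mcount' a b c x y` is the number of integer triples `(d,e,f)` with
`0 ≤ d ≤ c`, `0 ≤ e ≤ −a+b+c`, `0 ≤ f`, `d − e + f = x − (−a+b+c)`, `e + f = y`. -/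
noncomputable def mcount' (a b c x y : ℕ) : ℕ :=
  Set.ncard {t : ℤ × ℤ × ℤ |
    0 ≤ t.1 ∧ t.1 ≤ (c : ℤ) ∧ 0 ≤ t.2.1 ∧ t.2.1 ≤ -(a : ℤ) + b + c ∧ 0 ≤ t.2.2 ∧
    t.1 - t.2.1 + t.2.2 = (x : ℤ) - (-(a : ℤ) + b + c) ∧ t.2.1 + t.2.2 = (y : ℤ)}

namespace MCount

def solutions (c k s y : ℤ) : Set (ℤ × ℤ × ℤ) :=
  {t | 0 ≤ t.1 ∧ t.1 ≤ c ∧ 0 ≤ t.2.1 ∧ t.2.1 ≤ k ∧ 0 ≤ t.2.2 ∧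
    t.1 - t.2.1 + t.2.2 = s ∧ t.2.1 + t.2.2 = y}

def ofMiddle (s y e : ℤ) : ℤ × ℤ × ℤ := (s - y + 2 * e, e, y - e)

lemma ofMiddle_injective (s y : ℤ) : Function.Injective (ofMiddle s y) :=
  fun _ _ h => congrArg (fun t : ℤ × ℤ × ℤ => t.2.1) h

lemma solutions_eq_image (c k s y : ℤ) :
    solutions c k s y =
      ofMiddle s y '' Set.Icc (max 0 ((y - s + 1) / 2)) (min (min k y) ((y - s + c) / 2)) := by
  ext ⟨d, e, f⟩
  simp only [solutions, ofMiddle, Set.mem_ofPred_eq, Set.mem_image, Set.mem_Icc, Prod.mk.injEq]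
  constructor
  · rintro ⟨hd₀, hdc, he₀, hek, hf₀, hs, hy⟩
    exact ⟨e, ⟨by omega, by omega⟩, by omega, rfl, by omega⟩
  · rintro ⟨e, ⟨hlo, hhi⟩, rfl, rfl, rfl⟩
    omega

lemma ncard_solutions (c k s y : ℤ) :
    ((solutions c k s y).ncard : ℤ) =
      (min (min k y) ((y - s + c) / 2) + 1 - max 0 ((y - s + 1) / 2)).toNat := by
  rw [solutions_eq_image, Set.ncard_image_of_injective _ (ofMiddle_injective s y),
    ← Finset.coe_Icc, Set.ncard_coe_finset, Int.card_Icc]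

lemma mcount'_eq_ncard_solutions (a b c x y : ℕ) :
    mcount' a b c x y = (solutions c (-(a : ℤ) + b + c) (x - (-(a : ℤ) + b + c)) y).ncard :=
  rfl

end MCount

open MCount in
theorem mcount'_formula_c_lt_a_general (a b c x y : ℕ) (h2 : a ≤ b + c) :
    (mcount' a b c x y ≠ 0 ↔
      ((a : ℤ) - b - 2 * c ≤ -(x : ℤ) + y ∧ -(x : ℤ) + y ≤ -(a : ℤ) + b + c ∧
        -(a : ℤ) + b + c ≤ (x : ℤ) + y ∧
        (c = 0 → ((x : ℤ) + y) % 2 = ((a : ℤ) + b) % 2))) ∧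
    (mcount' a b c x y ≠ 0 →
      ∀ δ : ℤ, (δ = if ((x : ℤ) + y) % 2 = (-(a : ℤ) + b + c) % 2 then 0 else 1) →
      ((-(a : ℤ) + b + c ≤ (y : ℤ) → (mcount' a b c x y : ℤ) =
          min (min (((c : ℤ) - δ) / 2) ((-(a : ℤ) + b + c + x - y - δ) / 2))
            (min ((-(a : ℤ) + b + 2 * c - x + y) / 2) (-(a : ℤ) + b + c)) + 1) ∧
       ((y : ℤ) < -(a : ℤ) + b + c → (mcount' a b c x y : ℤ) =
          min (min (((c : ℤ) - δ) / 2) (((a : ℤ) - b - c + x + y - δ) / 2))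
            (min ((-(a : ℤ) + b + 2 * c - x + y) / 2) (y : ℤ)) + 1))) := by
  have hcount := ncard_solutions c (-(a : ℤ) + b + c) (x - (-(a : ℤ) + b + c)) y
  rw [← mcount'_eq_ncard_solutions] at hcount
  have hne : mcount' a b c x y ≠ 0 ↔ (mcount' a b c x y : ℤ) ≠ 0 := Int.natCast_ne_zero.symm
  refine ⟨hne.trans ⟨fun h => ⟨by omega, by omega, by omega, fun _ => by omega⟩,
    fun h => by omega⟩, fun h0 δ hδ => ?_⟩
  rw [hne] at h0
  split_ifs at hδ <;> subst hδ <;> constructor <;> intro hy <;> omega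

/-- Nonvanishing criterion and closed formula for `mcount'` in the regime `c < a ≤ b+c`. -/
theorem mcount'_formula_c_lt_a (a b c x y : ℕ) (h1 : c < a) (h2 : a ≤ b + c) :
    (mcount' a b c x y ≠ 0 ↔
      ((a : ℤ) - b - 2 * c ≤ -(x : ℤ) + y ∧ -(x : ℤ) + y ≤ -(a : ℤ) + b + c ∧
        -(a : ℤ) + b + c ≤ (x : ℤ) + y ∧
        (c = 0 → ((x : ℤ) + y) % 2 = ((a : ℤ) + b) % 2))) ∧
    (mcount' a b c x y ≠ 0 →
      ∀ δ : ℤ, (δ = if ((x : ℤ) + y) % 2 = (-(a : ℤ) + b + c) % 2 then 0 else 1) →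
      ((-(a : ℤ) + b + c ≤ (y : ℤ) → (mcount' a b c x y : ℤ) =
          min (min (((c : ℤ) - δ) / 2) ((-(a : ℤ) + b + c + x - y - δ) / 2))
            (min ((-(a : ℤ) + b + 2 * c - x + y) / 2) (-(a : ℤ) + b + c)) + 1) ∧
       ((y : ℤ) < -(a : ℤ) + b + c → (mcount' a b c x y : ℤ) =
          min (min (((c : ℤ) - δ) / 2) (((a : ℤ) - b - c + x + y - δ) / 2))
            (min ((-(a : ℤ) + b + 2 * c - x + y) / 2) (y : ℤ)) + 1))) :=
  mcount'_formula_c_lt_a_general a b c x y h2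
end

section
/- Fix nonnegative integers a,b,c with a ≤ c ≤ 2a, and nonnegative integers x,y. Let m(x,y) be the number of integer triples (d,e,f) with 0≤d≤2a-c, 0≤e≤b, 0≤f, d-e+f = x-b, e+f = y. Let n(x,y) be the number of integers α satisfying all of: a-⌊c/2⌋-(c mod 2) ≤ α, α ≤ ⌊c/2⌋+y, ⌊c/2⌋ ≤ α, α ≤ b+⌊c/2⌋, (-x+y+b+c-(c mod 2)+ε)/2 ≤ α ≤ -ε̲+(-x+y+2a+b-2·(c mod 2)+ε)/2, and (-x+y+2a+b-c-(c mod 2)+ε)/2 ≤ α, where ε ∈ {0,1} is determined by ε ≡ x+y+b (mod 2), and ε̲ = ε if c is even and 0 if c is odd. Then m(x,y) = n(x,y). -/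
/-- `ncount a b c x y`: number of integers `α` in the intersection of the listed intervals,
where `ε ∈ {0,1}` has the parity of `x+y+b` and `ε̲ = ε` if `c` is even, `0` if `c` is odd.
Inequalities with denominator 2 are stated in doubled (integral) form. -/
noncomputable def ncount (a b c x y : ℕ) : ℕ :=
  Set.ncard {α : ℤ |
    let ε : ℤ := ((x : ℤ) + y + b) % 2
    let εbar : ℤ := if (c : ℤ) % 2 = 0 then ε else 0
    (a : ℤ) - (c : ℤ) / 2 - (c : ℤ) % 2 ≤ α ∧
    α ≤ (c : ℤ) / 2 + y ∧
    (c : ℤ) / 2 ≤ α ∧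
    α ≤ (b : ℤ) + (c : ℤ) / 2 ∧
    -(x : ℤ) + y + b + c - (c : ℤ) % 2 + ε ≤ 2 * α ∧
    2 * α ≤ 2 * (-εbar) + (-(x : ℤ) + y + 2 * a + b - 2 * ((c : ℤ) % 2) + ε) ∧
    -(x : ℤ) + y + 2 * a + b - c - (c : ℤ) % 2 + ε ≤ 2 * α}

def middleCoords (a b c x y : ℕ) : Set ℤ :=
  {e | 0 ≤ e ∧ e ≤ b ∧ e ≤ y ∧ 0 ≤ (x : ℤ) - b - y + 2 * e ∧
    (x : ℤ) - b - y + 2 * e ≤ 2 * (a : ℤ) - c}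

theorem mcount_eq_ncard_middleCoords (a b c x y : ℕ) :
    mcount a b c x y = (middleCoords a b c x y).ncard := by
  have himage : {t : ℤ × ℤ × ℤ |
      0 ≤ t.1 ∧ t.1 ≤ 2 * (a : ℤ) - c ∧ 0 ≤ t.2.1 ∧ t.2.1 ≤ (b : ℤ) ∧ 0 ≤ t.2.2 ∧
      t.1 - t.2.1 + t.2.2 = (x : ℤ) - b ∧ t.2.1 + t.2.2 = (y : ℤ)} =
      (fun e : ℤ => ((x : ℤ) - b - y + 2 * e, e, (y : ℤ) - e)) '' middleCoords a b c x y := by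
    ext ⟨d, e, f⟩
    simp only [middleCoords, Set.mem_ofPred_eq, Set.mem_image, Prod.mk.injEq]
    constructor
    · intro h
      exact ⟨e, by omega, by omega, rfl, by omega⟩
    · rintro ⟨e, he, rfl, rfl, rfl⟩
      omega
  rw [mcount, himage]
  refine Set.ncard_image_of_injective _ fun e e' h => ?_
  simpa using congrArg (fun t : ℤ × ℤ × ℤ => t.2.1) h

theorem ncount_eq_ncard_middleCoords (a b c x y : ℕ) (hac : a ≤ c) :
    ncount a b c x y = (middleCoords a b c x y).ncard := by
  have himage : {α : ℤ |
      let ε : ℤ := ((x : ℤ) + y + b) % 2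
      let εbar : ℤ := if (c : ℤ) % 2 = 0 then ε else 0
      (a : ℤ) - (c : ℤ) / 2 - (c : ℤ) % 2 ≤ α ∧
      α ≤ (c : ℤ) / 2 + y ∧
      (c : ℤ) / 2 ≤ α ∧
      α ≤ (b : ℤ) + (c : ℤ) / 2 ∧
      -(x : ℤ) + y + b + c - (c : ℤ) % 2 + ε ≤ 2 * α ∧
      2 * α ≤ 2 * (-εbar) + (-(x : ℤ) + y + 2 * a + b - 2 * ((c : ℤ) % 2) + ε) ∧
      -(x : ℤ) + y + 2 * a + b - c - (c : ℤ) % 2 + ε ≤ 2 * α} =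
      (· + (c : ℤ) / 2) '' middleCoords a b c x y := by
    ext α
    simp only [middleCoords, Set.mem_ofPred_eq, Set.mem_image]
    rcases Int.emod_two_eq (c : ℤ) with hc | hc <;> simp only [hc, reduceIte] <;>
    · constructor
      · intro hα
        exact ⟨α - (c : ℤ) / 2, by omega, by omega⟩
      · rintro ⟨e, he, rfl⟩
        omega
  rw [ncount, himage]
  exact Set.ncard_image_of_injective _ (add_left_injective _)

theorem mcount_eq_ncount_general (a b c x y : ℕ) (h1 : a ≤ c) :
    mcount a b c x y = ncount a b c x y := by
  rw [mcount_eq_ncard_middleCoords, ncount_eq_ncard_middleCoords a b c x y h1]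

/-- The two coefficient counts agree: `m(x,y) = n(x,y)` for `a ≤ c ≤ 2a`. -/
theorem mcount_eq_ncount (a b c x y : ℕ) (h1 : a ≤ c) (h2 : c ≤ 2 * a) :
    mcount a b c x y = ncount a b c x y :=
  mcount_eq_ncount_general a b c x y h1
end

section
/- Let G = GL2(Q) × GSp4(Q) act on the set of lines in the 6-dimensional symplectic Q-space V = ⟨e1,f1⟩ ⊕ ⟨e2,e3,f3,f2⟩ (GL2 acting on the first summand, GSp4 on the second, with equal similitudes). Then this action on the set of 1-dimensional subspaces of V has exactly three orbits, represented by the lines ⟨f1⟩, ⟨f2⟩, and ⟨f1+f2⟩. -/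
def repLine : Fin 3 → Submodule ℚ V6 :=
  ![Submodule.span ℚ {f1}, Submodule.span ℚ {f2}, Submodule.span ℚ {f1 + f2}]

theorem LinearEquiv.transvection.map_eq_self {R V : Type*} [Ring R] [AddCommGroup V]
    [Module R V] {f : Module.Dual R V} {v : V} (hfv : f v = 0) {W : Submodule R V}
    (hW : ∀ x ∈ W, f x • v ∈ W) : W.map (transvection hfv : V →ₗ[R] V) = W := by
  refine le_antisymm (Submodule.map_le_iff_le_comap.mpr fun x hx => ?_) fun x hx => ?_
  · exact W.add_mem hx (hW x hx)
  · rw [Submodule.mem_map_equiv, symm_eq hfv (by simp [hfv]), apply, smul_neg, ← sub_eq_add_neg]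
    exact W.sub_mem hx (hW x hx)

theorem exists_mem_apply_ne_zero_and_apply_ne_zero {R M N P : Type*} [Semiring R]
    [AddCommMonoid M] [AddCommMonoid N] [AddCommMonoid P] [Module R M] [Module R N] [Module R P]
    (f : M →ₗ[R] N) (g : M →ₗ[R] P) {W : Submodule R M} {x y : M} (hx : x ∈ W) (hy : y ∈ W)
    (hfx : f x ≠ 0) (hgy : g y ≠ 0) : ∃ z ∈ W, f z ≠ 0 ∧ g z ≠ 0 := by
  by_cases hgx : g x = 0
  · by_cases hfy : f y = 0
    · exact ⟨x + y, W.add_mem hx hy, by simpa [hfy], by simpa [hgx]⟩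
    · exact ⟨y, hy, hfy, hgy⟩
  · exact ⟨x, hx, hfx, hgx⟩

namespace LinearMap.BilinForm.IsAlt

section CommRing

variable {K V : Type*} [CommRing K] [AddCommGroup V] [Module K V] {B : LinearMap.BilinForm K V}

def transvection (hB : B.IsAlt) (u : V) (c : K) : V ≃ₗ[K] V :=
  LinearEquiv.transvection (f := c • B.flip u) (v := u) (by simp [hB.self_eq_zero u])

theorem transvection_apply (hB : B.IsAlt) (u : V) (c : K) (x : V) :
    hB.transvection u c x = x + (c * B x u) • u :=
  rfl

theorem apply_transvection_transvection (hB : B.IsAlt) (u : V) (c : K) (x y : V) :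
    B (hB.transvection u c x) (hB.transvection u c y) = B x y := by
  simp only [transvection_apply, map_add, map_smul, LinearMap.add_apply, LinearMap.smul_apply,
    hB.self_eq_zero, ← hB.neg_eq y u, smul_eq_mul]
  ring

theorem transvection_apply_of_apply_eq_zero (hB : B.IsAlt) {u x : V} (c : K) (hx : B x u = 0) :
    hB.transvection u c x = x := by
  simp [transvection_apply, hx]

theorem map_transvection_of_mem (hB : B.IsAlt) {u : V} (c : K) {W : Submodule K V}
    (hu : u ∈ W) : W.map (hB.transvection u c : V →ₗ[K] V) = W :=
  LinearEquiv.transvection.map_eq_self _ fun _ _ => W.smul_mem _ hu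

theorem map_transvection_of_forall_apply_eq_zero (hB : B.IsAlt) {u : V} (c : K)
    {W : Submodule K V} (hW : ∀ x ∈ W, B x u = 0) :
    W.map (hB.transvection u c : V →ₗ[K] V) = W :=
  LinearEquiv.transvection.map_eq_self _ fun x hx => by simp [hW x hx]

end CommRing

section Field

variable {K V : Type*} [Field K] [AddCommGroup V] [Module K V] {B : LinearMap.BilinForm K V}

theorem transvection_sub_apply (hB : B.IsAlt) {w v : V} (h : B w v ≠ 0) :
    hB.transvection (v - w) (B w v)⁻¹ w = v := by
  simp [transvection_apply, hB.self_eq_zero, inv_mul_cancel₀ h]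

theorem exists_transvection_transvection_apply_eq (hB : B.IsAlt) {W : Submodule K V}
    (hW : ∀ v ∈ W, v ≠ 0 → ∃ z ∈ W, B z v ≠ 0) {w v : V} (hw : w ∈ W) (hv : v ∈ W)
    (hw0 : w ≠ 0) (hv0 : v ≠ 0) :
    ∃ u₁ ∈ W, ∃ u₂ ∈ W, ∃ c₁ c₂ : K, hB.transvection u₂ c₂ (hB.transvection u₁ c₁ w) = v := by
  obtain ⟨z₁, hz₁, hwz₁⟩ := hW w hw hw0
  obtain ⟨z₂, hz₂, hz₂v⟩ := hW v hv hv0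
  obtain ⟨z, hz, hwz, hzv⟩ := exists_mem_apply_ne_zero_and_apply_ne_zero (B w) (B.flip v) hz₁ hz₂
    (by rwa [← hB.neg_eq, neg_ne_zero]) hz₂v
  refine ⟨z - w, W.sub_mem hz hw, v - z, W.sub_mem hv hz, (B w z)⁻¹, (B z v)⁻¹, ?_⟩
  rw [transvection_sub_apply hB hwz, transvection_sub_apply hB hzv]

end Field

end LinearMap.BilinForm.IsAlt

theorem Submodule.map_equiv_le_iff_of_map_eq {R V : Type*} [Semiring R] [AddCommMonoid V]
    [Module R V] {g : V ≃ₗ[R] V} {W : Submodule R V} (hW : W.map (g : V →ₗ[R] V) = W)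
    (L : Submodule R V) : L.map (g : V →ₗ[R] V) ≤ W ↔ L ≤ W := by
  conv_lhs => rw [← hW]
  exact map_le_map_iff_of_injective g.injective L W

def sympForm : LinearMap.BilinForm ℚ V6 :=
  LinearMap.mk₂ ℚ symp
    (fun _ _ _ => by simp only [symp, Pi.add_apply]; ring)
    (fun _ _ _ => by simp only [symp, Pi.smul_apply, smul_eq_mul]; ring)
    (fun _ _ _ => by simp only [symp, Pi.add_apply]; ring)
    (fun _ _ _ => by simp only [symp, Pi.smul_apply, smul_eq_mul]; ring)

theorem sympForm_apply (x y : V6) : sympForm x y = symp x y :=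
  rfl

theorem sympForm_isAlt : sympForm.IsAlt := fun x => by
  rw [sympForm_apply, symp]
  ring

theorem mem_V1_iff {x : V6} : x ∈ V1 ↔ x 1 = 0 ∧ x 2 = 0 ∧ x 3 = 0 ∧ x 4 = 0 := by
  rw [show V1 = Pi.spanSubset ℚ {0, 5} by
    simp [V1, Pi.spanSubset, Set.image_insert_eq, e1, f1], Pi.mem_spanSubset_iff]
  simp [Fin.forall_fin_succ]

theorem mem_V2_iff {x : V6} : x ∈ V2 ↔ x 0 = 0 ∧ x 5 = 0 := by
  rw [show V2 = Pi.spanSubset ℚ {1, 2, 3, 4} by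
    simp [V2, Pi.spanSubset, Set.image_insert_eq, e2, e3, f3, f2],
    Pi.mem_spanSubset_iff]
  simp [Fin.forall_fin_succ]

theorem f1_mem_V1 : f1 ∈ V1 := by simp [mem_V1_iff, f1]

theorem f2_mem_V2 : f2 ∈ V2 := by simp [mem_V2_iff, f2]

theorem f1_ne_zero : f1 ≠ 0 := by simp [f1]

theorem f2_ne_zero : f2 ≠ 0 := by simp [f2]

theorem symp_eq_zero_of_mem_V1_of_mem_V2 {x y : V6} (hx : x ∈ V1) (hy : y ∈ V2) :
    symp x y = 0 := by
  simp_all [mem_V1_iff, mem_V2_iff, symp]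

theorem symp_eq_zero_of_mem_V2_of_mem_V1 {x y : V6} (hx : x ∈ V2) (hy : y ∈ V1) :
    symp x y = 0 := by
  simp_all [mem_V1_iff, mem_V2_iff, symp]

theorem trans_mem_Hgrp {g g' : V6 ≃ₗ[ℚ] V6} (hg : g ∈ Hgrp) (hg' : g' ∈ Hgrp) :
    g.trans g' ∈ Hgrp := by
  obtain ⟨⟨ν, hν, hgν⟩, hg₁, hg₂⟩ := hg
  obtain ⟨⟨ν', hν', hg'ν'⟩, hg'₁, hg'₂⟩ := hg'
  refine ⟨⟨ν' * ν, mul_ne_zero hν' hν, fun x y => ?_⟩, ?_, ?_⟩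
  · rw [LinearEquiv.trans_apply, LinearEquiv.trans_apply, hg'ν', hgν, mul_assoc]
  · rw [LinearEquiv.coe_trans, Submodule.map_comp, hg₁, hg'₁]
  · rw [LinearEquiv.coe_trans, Submodule.map_comp, hg₂, hg'₂]

theorem transvection_mem_Hgrp {u : V6} (hu : u ∈ V1 ∨ u ∈ V2) (c : ℚ) :
    sympForm_isAlt.transvection u c ∈ Hgrp := by
  refine ⟨⟨1, one_ne_zero, fun x y => ?_⟩, ?_, ?_⟩
  · simpa [sympForm_apply] using sympForm_isAlt.apply_transvection_transvection u c x y
  all_goals rcases hu with hu | hu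
  · exact sympForm_isAlt.map_transvection_of_mem c hu
  · exact sympForm_isAlt.map_transvection_of_forall_apply_eq_zero c
      fun x hx => symp_eq_zero_of_mem_V1_of_mem_V2 hx hu
  · exact sympForm_isAlt.map_transvection_of_forall_apply_eq_zero c
      fun x hx => symp_eq_zero_of_mem_V2_of_mem_V1 hx hu
  · exact sympForm_isAlt.map_transvection_of_mem c hu

theorem exists_mem_symp_ne_zero {W : Submodule ℚ V6} (hW : W = V1 ∨ W = V2) {v : V6}
    (hv : v ∈ W) (hv0 : v ≠ 0) : ∃ z ∈ W, symp z v ≠ 0 := by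
  -- `J v` for the complex structure `J` compatible with `symp`: `symp (J v) v = ∑ i, v i ^ 2`
  refine ⟨![v 5, v 4, v 3, -v 2, -v 1, -v 0], ?_, ?_⟩
  · rcases hW with rfl | rfl <;> simp_all [mem_V1_iff, mem_V2_iff]
  · have hsq : symp ![v 5, v 4, v 3, -v 2, -v 1, -v 0] v = ∑ i, v i ^ 2 := by
      simp only [symp, Fin.isValue, Matrix.cons_val_zero, Matrix.cons_val, Matrix.cons_val_one,
        Fin.sum_univ_six]
      ring
    rw [hsq]
    contrapose! hv0
    funext i
    exact pow_eq_zero_iff two_ne_zero |>.mp <|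
      (Finset.sum_eq_zero_iff_of_nonneg fun j _ => sq_nonneg (v j)).mp hv0 i (Finset.mem_univ i)

theorem exists_mem_Hgrp_apply_eq {W : Submodule ℚ V6} (hW : W = V1 ∨ W = V2) {w v : V6}
    (hw : w ∈ W) (hv : v ∈ W) (hw0 : w ≠ 0) (hv0 : v ≠ 0) :
    ∃ g ∈ Hgrp, g w = v ∧ ∀ x, (∀ u ∈ W, symp x u = 0) → g x = x := by
  obtain ⟨u₁, hu₁, u₂, hu₂, c₁, c₂, h⟩ :=
    sympForm_isAlt.exists_transvection_transvection_apply_eq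
      (fun _ hv hv0 => exists_mem_symp_ne_zero hW hv hv0) hw hv hw0 hv0
  have hV : ∀ u ∈ W, u ∈ V1 ∨ u ∈ V2 := by
    rcases hW with rfl | rfl
    exacts [fun _ => .inl, fun _ => .inr]
  refine ⟨_, trans_mem_Hgrp (transvection_mem_Hgrp (hV u₁ hu₁) c₁)
    (transvection_mem_Hgrp (hV u₂ hu₂) c₂), h, fun x hx => ?_⟩
  rw [LinearEquiv.trans_apply,
    sympForm_isAlt.transvection_apply_of_apply_eq_zero c₁ (hx u₁ hu₁),
    sympForm_isAlt.transvection_apply_of_apply_eq_zero c₂ (hx u₂ hu₂)]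

def repVec : Fin 3 → V6 :=
  ![f1, f2, f1 + f2]

theorem repLine_eq_span (k : Fin 3) : repLine k = Submodule.span ℚ {repVec k} := by
  fin_cases k <;> rfl

theorem exists_mem_Hgrp_apply_repVec_eq {v : V6} (hv0 : v ≠ 0) :
    ∃ k, ∃ g ∈ Hgrp, g (repVec k) = v := by
  set a : V6 := v 0 • e1 + v 5 • f1
  have ha : a ∈ V1 := by simp [mem_V1_iff, a, e1, f1]
  have hb : v - a ∈ V2 := by simp [mem_V2_iff, a, e1, f1]
  by_cases ha0 : a = 0
  · obtain ⟨g, hg, hgv, -⟩ :=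
      exists_mem_Hgrp_apply_eq (.inr rfl) f2_mem_V2 hb f2_ne_zero (by simpa [ha0] using hv0)
    exact ⟨1, g, hg, by simpa [repVec, ha0] using hgv⟩
  obtain ⟨g₁, hg₁, hg₁f1, hg₁fix⟩ :=
    exists_mem_Hgrp_apply_eq (.inl rfl) f1_mem_V1 ha f1_ne_zero ha0
  by_cases hb0 : v - a = 0
  · exact ⟨0, g₁, hg₁, by rw [repVec, Matrix.cons_val_zero, hg₁f1, sub_eq_zero.mp hb0]⟩
  obtain ⟨g₂, hg₂, hg₂f2, hg₂fix⟩ :=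
    exists_mem_Hgrp_apply_eq (.inr rfl) f2_mem_V2 hb f2_ne_zero hb0
  refine ⟨2, g₁.trans g₂, trans_mem_Hgrp hg₁ hg₂, ?_⟩
  calc g₂ (g₁ (f1 + f2))
      = g₂ (a + f2) := by
        rw [map_add, hg₁f1, hg₁fix f2 fun u hu => symp_eq_zero_of_mem_V2_of_mem_V1 f2_mem_V2 hu]
    _ = a + (v - a) := by
        rw [map_add, hg₂f2, hg₂fix a fun u hu => symp_eq_zero_of_mem_V1_of_mem_V2 ha hu]
    _ = v := add_sub_cancel a v

theorem repLine_le_V1_iff (k : Fin 3) : repLine k ≤ V1 ↔ k = 0 := by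
  fin_cases k <;> simp [repLine, mem_V1_iff, f1, f2]

theorem repLine_le_V2_iff (k : Fin 3) : repLine k ≤ V2 ↔ k = 1 := by
  fin_cases k <;> simp [repLine, mem_V2_iff, f1, f2]

theorem eq_of_map_repLine_eq {k k' : Fin 3} {g g' : V6 ≃ₗ[ℚ] V6} (hg : g ∈ Hgrp)
    (hg' : g' ∈ Hgrp)
    (h : (repLine k).map (g : V6 →ₗ[ℚ] V6) = (repLine k').map (g' : V6 →ₗ[ℚ] V6)) : k = k' := by
  have hle : ∀ W : Submodule ℚ V6, W.map (g : V6 →ₗ[ℚ] V6) = W →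
      W.map (g' : V6 →ₗ[ℚ] V6) = W → (repLine k ≤ W ↔ repLine k' ≤ W) := fun W hgW hg'W => by
    rw [← Submodule.map_equiv_le_iff_of_map_eq hgW,
      ← Submodule.map_equiv_le_iff_of_map_eq hg'W (repLine k'), h]
  have h₁ := hle V1 hg.2.1 hg'.2.1
  have h₂ := hle V2 hg.2.2 hg'.2.2
  rw [repLine_le_V1_iff, repLine_le_V1_iff] at h₁
  rw [repLine_le_V2_iff, repLine_le_V2_iff] at h₂
  omega

/-- The action of `GL2(ℚ) ⊠ GSp4(ℚ)` on the set of lines in `V` has exactly three orbits,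
represented by `⟨f1⟩`, `⟨f2⟩` and `⟨f1+f2⟩`. -/
theorem line_orbit_classification (L : Submodule ℚ V6) (hL : Module.finrank ℚ L = 1) :
    ∃! k : Fin 3, ∃ g ∈ Hgrp, Submodule.map (g : V6 →ₗ[ℚ] V6) (repLine k) = L := by
  obtain ⟨v, hvL, hv0⟩ := L.exists_mem_ne_zero_of_ne_bot <| by rintro rfl; simp at hL
  obtain rfl := eq_span_singleton_of_mem_of_finrank_eq_one hL hvL hv0
  obtain ⟨k, g, hg, hgv⟩ := exists_mem_Hgrp_apply_repVec_eq hv0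
  have hmap : (repLine k).map (g : V6 →ₗ[ℚ] V6) = Submodule.span ℚ {v} := by
    rw [repLine_eq_span, Submodule.map_span, Set.image_singleton, LinearEquiv.coe_coe, hgv]
  exact ⟨k, ⟨g, hg, hmap⟩, fun k' ⟨g', hg', h'⟩ => eq_of_map_repLine_eq hg' hg (h'.trans hmap.symm)⟩
end

section
/- Let a,b,c,x,y be nonnegative integers with a ≤ c ≤ 2a, and let ε∈{0,1} have the parity of x+y+b. If the 'big' value condition m(x,y) = (x−y+b−ε)/2 + 1 ≠ 0 holds for the counting function m (counting (d,e,f) with 0≤d≤2a−c, 0≤e≤b, f≥0, d−e+f=x−b, e+f=y), then y ≥ b, 0 ≤ (−x+y+b+ε)/2, and 0 ≤ (−x+y+2a−b−c+ε−[c odd]−2ε[c even])/2, where [P] is 1 if P holds and 0 otherwise. -/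
/-!
A triple counted by `mcount` is determined by its middle entry `e` (then `f = y − e` and
`d = x − b − y + 2e`), and the admissible `e` form the integer interval from `max 0 ⌈(b + y − x)/2⌉`
to `min b (min y ⌊(2a − c + b + y − x)/2⌋)`. By the parity condition, `(x − y + b − ε)/2 + 1` is the
length of the interval from `⌈(b + y − x)/2⌉` to `b`, which contains the admissible one; so if the
two lengths agree and are nonzero, both ends are attained. That is the three inequalities, the
correction `ε − [c odd] − 2ε[c even]` being `−((c + ε) mod 2)`, the rounding loss in
`⌊(2a − c + b + y − x)/2⌋`.
-/

theorem Int.eq_of_card_Icc_eq_of_le {l L U M : ℤ} (hl : l ≤ L) (hU : U ≤ M)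
    (hcard : ((Finset.Icc L U).card : ℤ) = M + 1 - l) (hne : (Finset.Icc L U).card ≠ 0) :
    L = l ∧ U = M := by
  rw [Int.card_Icc] at hcard hne
  omega

theorem mcount_eq_card_Icc (a b c x y : ℕ) :
    mcount a b c x y = (Finset.Icc (max 0 (((b : ℤ) + y - x + 1) / 2))
      (min (b : ℤ) (min (y : ℤ) ((2 * (a : ℤ) - c + b + y - x) / 2)))).card := by
  let triple : ℤ → ℤ × ℤ × ℤ := fun e => ((x : ℤ) - b - y + 2 * e, e, (y : ℤ) - e)
  have htriple : triple.Injective := fun e e' h => congrArg (fun t => t.2.1) h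
  rw [mcount, ← Set.ncard_coe_finset, ← Set.ncard_image_of_injective _ htriple]
  congr 1
  ext ⟨d, e, f⟩
  simp only [triple, Set.mem_ofPred_eq, Set.mem_image, Finset.coe_Icc, Set.mem_Icc, max_le_iff,
    le_min_iff, Prod.mk.injEq]
  constructor
  · intro h
    exact ⟨e, by omega, by omega, rfl, by omega⟩
  · rintro ⟨e, he, rfl, rfl, rfl⟩
    omega

theorem mcount_big_value (a b c x y : ℕ) {ε : ℤ} (hε : ε = 0 ∨ ε = 1)
    (hpar : ((x : ℤ) + y + b + ε) % 2 = 0)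
    (hm : (mcount a b c x y : ℤ) = ((x : ℤ) - y + b - ε) / 2 + 1)
    (hne : mcount a b c x y ≠ 0) :
    (b : ℤ) ≤ y ∧ 0 ≤ -(x : ℤ) + y + b + ε ∧ (b : ℤ) ≤ (2 * (a : ℤ) - c + b + y - x) / 2 := by
  rw [mcount_eq_card_Icc] at hm hne
  obtain ⟨hleft, hright⟩ := Int.eq_of_card_Icc_eq_of_le (le_max_right _ _) (min_le_left _ _)
    (by rw [hm]; omega) hne
  have hceil_nonneg : 0 ≤ ((b : ℤ) + y - x + 1) / 2 := hleft ▸ le_max_left _ _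
  obtain ⟨hby, hbu⟩ := le_min_iff.mp (min_eq_left_iff.mp hright)
  exact ⟨hby, by omega, hbu⟩

theorem mcount_big_value_consequences_general (a b c x y : ℕ)
    (ε : ℤ) (hε : ε = 0 ∨ ε = 1) (hpar : ((x : ℤ) + y + b + ε) % 2 = 0)
    (hm : (mcount a b c x y : ℤ) = ((x : ℤ) - y + b - ε) / 2 + 1)
    (hne : mcount a b c x y ≠ 0) :
    (b : ℤ) ≤ (y : ℤ) ∧
    0 ≤ -(x : ℤ) + y + b + ε ∧
    0 ≤ -(x : ℤ) + y + 2 * a - b - c + ε - (if Odd (c : ℤ) then 1 else 0)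
        - 2 * ε * (if Even (c : ℤ) then 1 else 0) := by
  obtain ⟨hby, hlow, hup⟩ := mcount_big_value a b c x y hε hpar hm hne
  refine ⟨hby, hlow, ?_⟩
  rcases Int.even_or_odd (c : ℤ) with hc | hc
  · rw [if_neg (Int.not_odd_iff_even.mpr hc), if_pos hc]
    obtain ⟨k, hk⟩ := hc
    omega
  · rw [if_pos hc, if_neg (Int.not_even_iff_odd.mpr hc)]
    obtain ⟨k, hk⟩ := hc
    omega

/-- If `ε ∈ {0,1}` has the parity of `x+y+b` and the counting function takes the 'big' value
`m(x,y) = (x−y+b−ε)/2 + 1 ≠ 0`, then `y ≥ b`, `0 ≤ (−x+y+b+ε)/2`, and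
`0 ≤ (−x+y+2a−b−c+ε−[c odd]−2ε[c even])/2` (inequalities stated with even numerators). -/
theorem mcount_big_value_consequences (a b c x y : ℕ) (h1 : a ≤ c) (h2 : c ≤ 2 * a)
    (ε : ℤ) (hε : ε = 0 ∨ ε = 1) (hpar : ((x : ℤ) + y + b + ε) % 2 = 0)
    (hm : (mcount a b c x y : ℤ) = ((x : ℤ) - y + b - ε) / 2 + 1)
    (hne : mcount a b c x y ≠ 0) :
    (b : ℤ) ≤ (y : ℤ) ∧
    0 ≤ -(x : ℤ) + y + b + ε ∧
    0 ≤ -(x : ℤ) + y + 2 * a - b - c + ε - (if Odd (c : ℤ) then 1 else 0)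
        - 2 * ε * (if Even (c : ℤ) then 1 else 0) :=
  mcount_big_value_consequences_general a b c x y ε hε hpar hm hne
end
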